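/- Let F(W) = (1/2)∑_{t=1}^{T} m_t^{-1} ‖X^t w^t − y^t‖², where w^t are the columns of W. If every matrix X^t (X^t)^⊤ has eigenvalues in [λ_min, λ_max] with λ_min > 0, S is a unit-norm direction with columns s^t satisfying ⟨∇F(W), S⟩² ≥ (ρ/(n₁n₂)) ‖∇F(W)‖², and ᾱ minimizes α ↦ F(W + αS), then F(W + ᾱS) ≤ (1 − ρ λ_min m_max^{-1} / (n₁n₂ λ_max ∑_{t} m_t^{-1})) F(W), where m_max = max_t m_t. -/
import Mathlib


open scoped BigOperators

/-- MLMTL least-squares objective `F(W) = (1/2) ∑_t m_t⁻¹ ‖Xᵗ wᵗ − yᵗ‖²`. -/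
noncomputable def mlmtlObj {T D : ℕ} (m : Fin T → ℕ)
    (X : (t : Fin T) → Matrix (Fin (m t)) (Fin D) ℝ)
    (y : (t : Fin T) → Fin (m t) → ℝ)
    (W : Fin T → Fin D → ℝ) : ℝ :=
  (1 / 2) * ∑ t, ((m t : ℝ))⁻¹ * ∑ i, ((X t).mulVec (W t) i - y t i) ^ 2

/-- Its gradient, columnwise `m_t⁻¹ (Xᵗ)ᵀ (Xᵗ wᵗ − yᵗ)`. -/
noncomputable def mlmtlGrad {T D : ℕ} (m : Fin T → ℕ)
    (X : (t : Fin T) → Matrix (Fin (m t)) (Fin D) ℝ)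
    (y : (t : Fin T) → Fin (m t) → ℝ)
    (W : Fin T → Fin D → ℝ) : Fin T → Fin D → ℝ :=
  fun t => ((m t : ℝ))⁻¹ • ((X t).transpose.mulVec ((X t).mulVec (W t) - y t))

/-- Frobenius inner product on `Fin T → Fin D → ℝ`. -/
def finnerF {T D : ℕ} (A B : Fin T → Fin D → ℝ) : ℝ := ∑ t, ∑ j, A t j * B t j

lemma swap_lemma {n D : ℕ} (X : Matrix (Fin n) (Fin D) ℝ) (r : Fin n → ℝ) (s : Fin D → ℝ) :
    ∑ j, X.transpose.mulVec r j * s j = ∑ i, r i * X.mulVec s i := by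
  simp only [Matrix.mulVec, Matrix.transpose_apply, dotProduct, Finset.sum_mul,
    Finset.mul_sum]
  rw [Finset.sum_comm]
  exact Finset.sum_congr rfl fun i _ => Finset.sum_congr rfl fun j _ => by ring

theorem stmt_14 {T D : ℕ} (m : Fin T → ℕ) (hm : ∀ t, 0 < m t)
    (X : (t : Fin T) → Matrix (Fin (m t)) (Fin D) ℝ)
    (y : (t : Fin T) → Fin (m t) → ℝ)
    (lammin lammax : ℝ) (hlammin : 0 < lammin)
    (heig : ∀ (t : Fin T) (v : Fin (m t) → ℝ),
      lammin * ∑ i, v i ^ 2 ≤ ∑ j, ((X t).transpose.mulVec v j) ^ 2 ∧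
      ∑ j, ((X t).transpose.mulVec v j) ^ 2 ≤ lammax * ∑ i, v i ^ 2)
    (mmax : ℝ) (hmmax : ∀ t, (m t : ℝ) ≤ mmax) (hmmax' : ∃ t, (m t : ℝ) = mmax)
    (N : ℝ) (hN : 1 ≤ N) (ρ : ℝ) (hρ0 : 0 < ρ) (hρ1 : ρ ≤ 1)
    (W S : Fin T → Fin D → ℝ) (hS : finnerF S S = 1)
    (hsel : (finnerF (mlmtlGrad m X y W) S) ^ 2
      ≥ (ρ / N) * finnerF (mlmtlGrad m X y W) (mlmtlGrad m X y W))
    (α' : ℝ)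
    (hopt : ∀ α : ℝ, mlmtlObj m X y (fun t => W t + α' • S t)
      ≤ mlmtlObj m X y (fun t => W t + α • S t)) :
    mlmtlObj m X y (fun t => W t + α' • S t)
      ≤ (1 - ρ * lammin * mmax⁻¹ / (N * lammax * ∑ t, ((m t : ℝ))⁻¹))
        * mlmtlObj m X y W := by
  classical
  obtain ⟨t₀, ht₀⟩ := hmmax'
  have hmpos : ∀ t, (0:ℝ) < (m t : ℝ) := fun t => by exact_mod_cast hm t
  have hmmaxpos : 0 < mmax := ht₀ ▸ hmpos t₀
  have hNpos : 0 < N := lt_of_lt_of_le one_pos hN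
  have hlammax : 0 < lammax := by
    have i0 : Fin (m t₀) := ⟨0, hm t₀⟩
    have h := heig t₀ (Pi.single i0 1)
    have hone : ∑ i, (Pi.single i0 1 : Fin (m t₀) → ℝ) i ^ 2 = 1 := by
      rw [Finset.sum_eq_single i0]
      · simp
      · intro b _ hb; simp [Pi.single_apply, hb]
      · simp
    rw [hone] at h
    nlinarith [h.1, h.2]
  set F0 := mlmtlObj m X y W with hF0def
  set g := finnerF (mlmtlGrad m X y W) S with hgdef
  set GG := finnerF (mlmtlGrad m X y W) (mlmtlGrad m X y W) with hGGdef
  set c := ∑ t, ((m t:ℝ))⁻¹ * ∑ i, ((X t).mulVec (S t) i)^2 with hcdef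
  set Sinv := ∑ t, ((m t:ℝ))⁻¹ with hSinvdef
  have hSinvpos : 0 < Sinv := by
    rw [hSinvdef]
    refine Finset.sum_pos (fun t _ => inv_pos.2 (hmpos t)) ⟨t₀, Finset.mem_univ t₀⟩
  have hg : g = ∑ t, ((m t:ℝ))⁻¹ * ∑ i, ((X t).mulVec (W t) i - y t i) * (X t).mulVec (S t) i := by
    rw [hgdef, finnerF]
    refine Finset.sum_congr rfl fun t _ => ?_
    rw [Finset.mul_sum]
    have hpt : ∀ j, mlmtlGrad m X y W t j * S t j
        = ((m t:ℝ))⁻¹ * ((X t).transpose.mulVec ((X t).mulVec (W t) - y t) j * S t j) := by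
      intro j; simp [mlmtlGrad]; ring
    simp only [hpt, ← Finset.mul_sum]
    rw [swap_lemma]
    simp [Pi.sub_apply]
  have hexp : ∀ α : ℝ, mlmtlObj m X y (fun t => W t + α • S t)
      = F0 + α * g + α^2 * c / 2 := by
    intro α
    have hsplit : ∀ t : Fin T, ((m t:ℝ))⁻¹ * ∑ i, ((X t).mulVec (W t + α • S t) i - y t i)^2
        = ((m t:ℝ))⁻¹ * (∑ i, ((X t).mulVec (W t) i - y t i)^2)
          + (2*α) * (((m t:ℝ))⁻¹ * ∑ i, ((X t).mulVec (W t) i - y t i) * (X t).mulVec (S t) i)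
          + α^2 * (((m t:ℝ))⁻¹ * ∑ i, ((X t).mulVec (S t) i)^2) := by
      intro t
      have h : ∀ i, (X t).mulVec (W t + α • S t) i
          = (X t).mulVec (W t) i + α * (X t).mulVec (S t) i := by
        intro i; simp [Matrix.mulVec_add, Matrix.mulVec_smul]
      simp only [h]
      have expand : ∑ i, ((X t).mulVec (W t) i + α * (X t).mulVec (S t) i - y t i)^2
          = (∑ i, ((X t).mulVec (W t) i - y t i)^2)
            + (2*α) * (∑ i, ((X t).mulVec (W t) i - y t i) * (X t).mulVec (S t) i)
            + α^2 * ∑ i, ((X t).mulVec (S t) i)^2 := by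
        rw [Finset.mul_sum, Finset.mul_sum, ← Finset.sum_add_distrib, ← Finset.sum_add_distrib]
        exact Finset.sum_congr rfl fun i _ => by ring
      rw [expand]; ring
    calc mlmtlObj m X y (fun t => W t + α • S t)
        = (1/2) * ∑ t, (((m t:ℝ))⁻¹ * (∑ i, ((X t).mulVec (W t) i - y t i)^2)
          + (2*α) * (((m t:ℝ))⁻¹ * ∑ i, ((X t).mulVec (W t) i - y t i) * (X t).mulVec (S t) i)
          + α^2 * (((m t:ℝ))⁻¹ * ∑ i, ((X t).mulVec (S t) i)^2)) := by
          rw [mlmtlObj]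
          exact congrArg _ (Finset.sum_congr rfl fun t _ => hsplit t)
      _ = F0 + α * g + α^2 * c / 2 := by
          rw [hF0def, mlmtlObj, hg, hcdef,
            Finset.sum_add_distrib, Finset.sum_add_distrib, ← Finset.mul_sum, ← Finset.mul_sum]
          ring
  have hF0nn : 0 ≤ F0 := by
    rw [hF0def, mlmtlObj]
    refine mul_nonneg (by norm_num) (Finset.sum_nonneg fun t _ =>
      mul_nonneg (inv_nonneg.2 (hmpos t).le)
        (Finset.sum_nonneg fun i _ => sq_nonneg _))
  have hcnn : 0 ≤ c := by
    rw [hcdef]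
    exact Finset.sum_nonneg fun t _ => mul_nonneg (inv_nonneg.2 (hmpos t).le)
      (Finset.sum_nonneg fun i _ => sq_nonneg _)
  have hGG : 2 * lammin * mmax⁻¹ * F0 ≤ GG := by
    have key : ∀ t : Fin T,
        ((m t:ℝ))⁻¹ * mmax⁻¹ * (lammin * ∑ i, ((X t).mulVec (W t) i - y t i)^2)
          ≤ ∑ j, (mlmtlGrad m X y W t j)^2 := by
      intro t
      have h1 : ∑ j, (mlmtlGrad m X y W t j)^2
          = ((m t:ℝ))⁻¹^2 * ∑ j, ((X t).transpose.mulVec ((X t).mulVec (W t) - y t) j)^2 := by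
        rw [Finset.mul_sum]
        exact Finset.sum_congr rfl fun j _ => by simp [mlmtlGrad]; ring
      rw [h1]
      have h2 := (heig t ((X t).mulVec (W t) - y t)).1
      have h2' : lammin * ∑ i, ((X t).mulVec (W t) i - y t i)^2
          ≤ ∑ j, ((X t).transpose.mulVec ((X t).mulVec (W t) - y t) j)^2 := by
        simpa [Pi.sub_apply] using h2
      have hmono : ((m t:ℝ))⁻¹ * mmax⁻¹ ≤ ((m t:ℝ))⁻¹^2 := by
        rw [sq]
        exact mul_le_mul_of_nonneg_left
          (inv_anti₀ (hmpos t) (hmmax t)) (inv_nonneg.2 (hmpos t).le)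
      have hnn : 0 ≤ lammin * ∑ i, ((X t).mulVec (W t) i - y t i)^2 :=
        mul_nonneg hlammin.le (Finset.sum_nonneg fun i _ => sq_nonneg _)
      calc ((m t:ℝ))⁻¹ * mmax⁻¹ * (lammin * ∑ i, ((X t).mulVec (W t) i - y t i)^2)
          ≤ ((m t:ℝ))⁻¹^2 * (lammin * ∑ i, ((X t).mulVec (W t) i - y t i)^2) :=
            mul_le_mul_of_nonneg_right hmono hnn
        _ ≤ ((m t:ℝ))⁻¹^2 * ∑ j, ((X t).transpose.mulVec ((X t).mulVec (W t) - y t) j)^2 :=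
            mul_le_mul_of_nonneg_left h2' (by positivity)
    have hsum : ∑ t, ((m t:ℝ))⁻¹ * mmax⁻¹ * (lammin * ∑ i, ((X t).mulVec (W t) i - y t i)^2)
        ≤ GG := by
      rw [hGGdef, finnerF]
      refine Finset.sum_le_sum fun t _ => ?_
      simpa [pow_two] using key t
    calc 2 * lammin * mmax⁻¹ * F0
        = ∑ t, ((m t:ℝ))⁻¹ * mmax⁻¹ * (lammin * ∑ i, ((X t).mulVec (W t) i - y t i)^2) := by
          rw [hF0def, mlmtlObj]
          rw [show ∀ s : ℝ, 2 * lammin * mmax⁻¹ * (1/2 * s) = lammin * mmax⁻¹ * s from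
            fun s => by ring]
          rw [Finset.mul_sum]
          exact Finset.sum_congr rfl fun t _ => by ring
      _ ≤ GG := hsum
  have hcle : c ≤ lammax * Sinv := by
    have percol : ∀ t : Fin T, ∑ j, (S t j)^2 ≤ 1 := by
      intro t
      have hnn : ∀ u ∈ Finset.univ, (0:ℝ) ≤ ∑ j, S u j * S u j :=
        fun u _ => Finset.sum_nonneg fun j _ => mul_self_nonneg _
      have hle := Finset.single_le_sum hnn (Finset.mem_univ t)
      rw [finnerF] at hS
      calc ∑ j, (S t j)^2 = ∑ j, S t j * S t j :=
            Finset.sum_congr rfl fun j _ => pow_two (S t j)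
        _ ≤ ∑ u, ∑ j, S u j * S u j := hle
        _ = 1 := hS
    have pert : ∀ t : Fin T, ∑ i, ((X t).mulVec (S t) i)^2 ≤ lammax := by
      intro t
      set a := ∑ i, ((X t).mulVec (S t) i)^2 with hadef
      have hann : 0 ≤ a := Finset.sum_nonneg fun i _ => sq_nonneg _
      have hswap : ∑ j, (X t).transpose.mulVec ((X t).mulVec (S t)) j * S t j = a := by
        rw [swap_lemma, hadef]
        exact Finset.sum_congr rfl fun i _ => (pow_two _).symm
      have hcs := Finset.sum_mul_sq_le_sq_mul_sq Finset.univ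
        (fun j => (X t).transpose.mulVec ((X t).mulVec (S t)) j) (fun j => S t j)
      rw [hswap] at hcs
      have hup := (heig t ((X t).mulVec (S t))).2
      have hq := percol t
      have hqnn : 0 ≤ ∑ j, (S t j)^2 := Finset.sum_nonneg fun j _ => sq_nonneg _
      nlinarith [hcs, hup, hq, hqnn, hann, hlammax,
        mul_le_mul_of_nonneg_left hq (mul_nonneg hlammax.le hann)]
    rw [hcdef, hSinvdef, Finset.mul_sum]
    refine Finset.sum_le_sum fun t _ => ?_
    calc ((m t:ℝ))⁻¹ * ∑ i, ((X t).mulVec (S t) i)^2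
        ≤ ((m t:ℝ))⁻¹ * lammax :=
          mul_le_mul_of_nonneg_left (pert t) (inv_nonneg.2 (hmpos t).le)
      _ = lammax * ((m t:ℝ))⁻¹ := mul_comm _ _
  set L := mlmtlObj m X y (fun t => W t + α' • S t) with hLdef
  have hopt' : ∀ α : ℝ, L ≤ F0 + α * g + α^2 * c / 2 :=
    fun α => (hopt α).trans_eq (hexp α)
  clear_value F0 g GG c Sinv L
  by_cases hc0 : c = 0
  · have hgz : g = 0 := by
      by_contra hgne
      have h1 := hopt' ((L - F0 - 1)/g)
      rw [div_mul_cancel₀ _ hgne, hc0] at h1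
      linarith [h1]
    have hGGz : GG ≤ 0 := by
      have h := hsel
      rw [hgz] at h
      by_contra hGGpos
      push_neg at hGGpos
      have := mul_pos (div_pos hρ0 hNpos) hGGpos
      linarith [h]
    have hF00 : F0 = 0 := by
      have hmxinv : (0:ℝ) < mmax⁻¹ := inv_pos.2 hmmaxpos
      have h5 : (0:ℝ) < 2 * lammin * mmax⁻¹ := by positivity
      have hF0le : F0 ≤ 0 := by
        by_contra hpos
        push_neg at hpos
        have := mul_pos h5 hpos
        linarith
      exact le_antisymm hF0le hF0nn
    have hL := hopt' 0
    rw [hF00] at hL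
    rw [hF00, mul_zero]
    linarith [hL]
  · have hcpos : 0 < c := lt_of_le_of_ne hcnn (Ne.symm hc0)
    have hkey : L ≤ F0 - g^2/(2*c) := by
      have h := hopt' (-(g/c))
      have heq : F0 + (-(g/c)) * g + (-(g/c))^2 * c / 2 = F0 - g^2/(2*c) := by
        field_simp; ring
      linarith [heq.le, heq.ge]
    have hCpos : 0 < lammax * Sinv := mul_pos hlammax hSinvpos
    have h2 : (ρ/N) * (2*lammin*mmax⁻¹*F0) ≤ g^2 :=
      le_trans (mul_le_mul_of_nonneg_left hGG (div_nonneg hρ0.le hNpos.le)) hsel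
    have hnumnn : 0 ≤ (ρ/N) * (2*lammin*mmax⁻¹*F0) := by positivity
    have h3 : (ρ/N) * (2*lammin*mmax⁻¹*F0) / (2*(lammax*Sinv)) ≤ g^2/(2*c) := by
      gcongr <;> linarith
    have heq2 : (ρ/N) * (2*lammin*mmax⁻¹*F0) / (2*(lammax*Sinv))
        = ρ * lammin * mmax⁻¹ / (N * lammax * Sinv) * F0 := by
      field_simp
    rw [sub_mul, one_mul]
    linarith [hkey, h3, heq2.le, heq2.ge]
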